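/- Let P_t = ℙ(V₁(t) ∧ V₄(t)) ⊂ ℙ(Λ²ℂ⁵) where V₁(t) = span{e₀ + t e₁ − t² e₄} and V₄(t) = span{e₀, e₁, e₂ + t e₃, e₄}, and let S = ℙ(Λ² span{e₀, e₁, e₄}). Then for each t ∈ ℂ, the intersection P_t ∩ S is a projective line (a 1-dimensional linear subspace of ℙ(Λ²ℂ⁵)). -/
import Mathlib


/-- A concrete model of `Λ²ℂ⁵` inside 5×5 matrices: `v ∧ w` corresponds to the
skew-symmetric matrix with entries `vᵢwⱼ − vⱼwᵢ`. -/
def wedge (v w : Fin 5 → ℂ) : Matrix (Fin 5) (Fin 5) ℂ :=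
  fun i j => v i * w j - v j * w i

/-- `V₁(t) = span{e₀ + t e₁ − t² e₄}`: its generating vector. -/
def v1 (t : ℂ) : Fin 5 → ℂ := ![1, t, 0, 0, -t ^ 2]

/-- `V₄(t) = span{e₀, e₁, e₂ + t e₃, e₄}`. -/
noncomputable def V4 (t : ℂ) : Submodule ℂ (Fin 5 → ℂ) :=
  Submodule.span ℂ {![1,0,0,0,0], ![0,1,0,0,0], ![0,0,1,t,0], ![0,0,0,0,1]}

/-- The linear subspace underlying the σ₃,₁-type plane
`P_t = ℙ(V₁(t) ∧ V₄(t)) ⊂ ℙ(Λ²ℂ⁵)`. -/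
noncomputable def Pt (t : ℂ) : Submodule ℂ (Matrix (Fin 5) (Fin 5) ℂ) :=
  Submodule.span ℂ {M | ∃ w ∈ V4 t, M = wedge (v1 t) w}

/-- The linear subspace underlying the σ₂,₂-type plane `S = ℙ(Λ² span{e₀,e₁,e₄})`. -/
noncomputable def Splane : Submodule ℂ (Matrix (Fin 5) (Fin 5) ℂ) :=
  Submodule.span ℂ {M | ∃ v ∈ Submodule.span ℂ {![1,0,0,0,0], ![0,1,0,0,0], ![0,0,0,0,1]},
    ∃ w ∈ Submodule.span ℂ ({![1,0,0,0,0], ![0,1,0,0,0], ![0,0,0,0,1]} :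
      Set (Fin 5 → ℂ)), M = wedge v w}

-- bilinearity
lemma wedge_add (v x y : Fin 5 → ℂ) : wedge v (x + y) = wedge v x + wedge v y := by
  funext i j; simp [wedge, Matrix.add_apply]; ring

lemma wedge_smul (v : Fin 5 → ℂ) (c : ℂ) (x : Fin 5 → ℂ) :
    wedge v (c • x) = c • wedge v x := by
  funext i j; simp [wedge, Matrix.smul_apply]; ring

lemma wedge_zero (v : Fin 5 → ℂ) : wedge v 0 = 0 := by
  funext i j; simp [wedge]

-- abbreviations
noncomputable def M1 (t : ℂ) : Matrix (Fin 5) (Fin 5) ℂ := wedge (v1 t) ![0,1,0,0,0]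
noncomputable def M2 (t : ℂ) : Matrix (Fin 5) (Fin 5) ℂ := wedge (v1 t) ![0,0,0,0,1]
noncomputable def W3 (t : ℂ) : Matrix (Fin 5) (Fin 5) ℂ := wedge (v1 t) ![0,0,1,t,0]

lemma wedge_e0 (t : ℂ) :
    wedge (v1 t) ![1,0,0,0,0] = (-t) • M1 t + (t^2) • M2 t := by
  funext i j
  fin_cases i <;> fin_cases j <;>
    simp [wedge, v1, M1, M2, Matrix.add_apply, Matrix.smul_apply] <;> ring

lemma Pt_eq (t : ℂ) : Pt t = Submodule.span ℂ {M1 t, M2 t, W3 t} := by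
  apply le_antisymm
  · rw [Pt, Submodule.span_le]
    rintro M ⟨w, hw, rfl⟩
    induction hw using Submodule.span_induction with
    | mem x hx =>
      rcases hx with h | h | h | h
      · subst h
        rw [wedge_e0]
        exact Submodule.add_mem _
          (Submodule.smul_mem _ _ (Submodule.subset_span (by simp)))
          (Submodule.smul_mem _ _ (Submodule.subset_span (by simp)))
      · subst h; exact Submodule.subset_span (by simp [M1])
      · subst h; exact Submodule.subset_span (by simp [W3])
      · subst h; exact Submodule.subset_span (by simp [M2])
    | zero => rw [wedge_zero]; exact Submodule.zero_mem _
    | add x y hx hy ihx ihy => rw [wedge_add]; exact Submodule.add_mem _ ihx ihy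
    | smul c x hx ih => rw [wedge_smul]; exact Submodule.smul_mem _ _ ih
  · rw [Submodule.span_le]
    rintro M (h | h | h) <;> subst h <;> apply Submodule.subset_span
    · exact ⟨_, Submodule.subset_span (by simp), rfl⟩
    · exact ⟨_, Submodule.subset_span (by simp), rfl⟩
    · exact ⟨_, Submodule.subset_span (by simp), rfl⟩

lemma coord2_zero (v : Fin 5 → ℂ)
    (hv : v ∈ Submodule.span ℂ ({![1,0,0,0,0], ![0,1,0,0,0], ![0,0,0,0,1]} :
      Set (Fin 5 → ℂ))) : v 2 = 0 := by
  induction hv using Submodule.span_induction with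
  | mem x hx => rcases hx with h | h | h <;> subst h <;> simp
  | zero => simp
  | add x y hx hy ihx ihy => simp [ihx, ihy]
  | smul c x hx ih => simp [ih]

lemma Splane_entry {M : Matrix (Fin 5) (Fin 5) ℂ} (hM : M ∈ Splane) : M 0 2 = 0 := by
  induction hM using Submodule.span_induction with
  | mem x hx =>
    obtain ⟨v, hv, w, hw, rfl⟩ := hx
    simp [wedge, coord2_zero v hv, coord2_zero w hw]
  | zero => simp
  | add x y hx hy ihx ihy => simp [Matrix.add_apply, ihx, ihy]
  | smul c x hx ih => simp [Matrix.smul_apply, ih]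

lemma v1_mem (t : ℂ) : v1 t ∈ Submodule.span ℂ
    ({![1,0,0,0,0], ![0,1,0,0,0], ![0,0,0,0,1]} : Set (Fin 5 → ℂ)) := by
  have : v1 t = (1:ℂ) • ![1,0,0,0,0] + t • ![0,1,0,0,0] + (-t^2) • ![0,0,0,0,1] := by
    funext i; fin_cases i <;> simp [v1]
  rw [this]
  exact Submodule.add_mem _ (Submodule.add_mem _
    (Submodule.smul_mem _ _ (Submodule.subset_span (by simp)))
    (Submodule.smul_mem _ _ (Submodule.subset_span (by simp))))
    (Submodule.smul_mem _ _ (Submodule.subset_span (by simp)))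

lemma spanM_le_Splane (t : ℂ) :
    Submodule.span ℂ {M1 t, M2 t} ≤ Splane := by
  rw [Submodule.span_le]
  rintro M (h | h) <;> subst h <;> apply Submodule.subset_span
  · exact ⟨_, v1_mem t, _, Submodule.subset_span (by simp), rfl⟩
  · exact ⟨_, v1_mem t, _, Submodule.subset_span (by simp), rfl⟩

lemma W3_inf (t : ℂ) : Submodule.span ℂ {W3 t} ⊓ Splane = ⊥ := by
  rw [eq_bot_iff]
  rintro x ⟨hx1, hx2⟩
  obtain ⟨c, rfl⟩ := Submodule.mem_span_singleton.mp hx1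
  have h2 : (c • W3 t) 0 2 = c := by simp [W3, wedge, v1, Matrix.smul_apply]
  have := Splane_entry hx2
  rw [this] at h2
  simp [← h2]

lemma indep (t : ℂ) : LinearIndependent ℂ ![M1 t, M2 t] := by
  rw [LinearIndependent.pair_iff]
  intro s u h
  have h1 := congrFun (congrFun h 0) 1
  have h2 := congrFun (congrFun h 0) 4
  simp [M1, M2, wedge, v1, Matrix.add_apply, Matrix.smul_apply] at h1 h2
  exact ⟨h1, h2⟩

/-- For each `t ∈ ℂ`, the intersection `P_t ∩ S` is a projective line, i.e. the
corresponding linear subspaces of `Λ²ℂ⁵` intersect in a 2-dimensional subspace. -/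
theorem Pt_inter_S_is_line : ∀ t : ℂ, Module.finrank ℂ ↥(Pt t ⊓ Splane) = 2 := by
  intro t
  have hsplit : Pt t = Submodule.span ℂ {M1 t, M2 t} ⊔ Submodule.span ℂ {W3 t} := by
    rw [Pt_eq, ← Submodule.span_union]
    congr 1
    ext x; simp; tauto
  rw [hsplit, sup_inf_assoc_of_le _ (spanM_le_Splane t), W3_inf t, sup_bot_eq]
  have hr : ({M1 t, M2 t} : Set (Matrix (Fin 5) (Fin 5) ℂ)) = Set.range ![M1 t, M2 t] := by
    simp [Set.range_subset_iff]
    ext x; simp [Fin.exists_fin_two]; tauto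
  rw [hr, finrank_span_eq_card (indep t)]
  simp
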